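/- (Constant Moments Ratio property.) Let p be a probability mass function on the nonnegative integers that follows GHD(a, b, θ) with positive parameters a = (a_1, …, a_P), b = (b_1, …, b_Q) and θ > 0, and let m := ∑_{k≥0} k · p(k) denote its mean. Then for every positive integer r, ∑_{k≥0} (k)_r · p(k) = m^r · ∏_{i=1}^P (⟨a_i⟩^r / a_i^r) · ∏_{l=1}^Q (b_l^r / ⟨b_l⟩^r). In particular the r-th factorial moment equals f^{(r)}(m) where f^{(r)}(x) = x^r ∏_{i=1}^P (⟨a_i⟩^r / a_i^r) ∏_{l=1}^Q (b_l^r / ⟨b_l⟩^r). -/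

import Mathlib

/-- The rising factorial `⟨a⟩^j = a (a+1) ⋯ (a+j-1)`. -/
noncomputable def risingFact (a : ℝ) (j : ℕ) : ℝ := ∏ i ∈ Finset.range j, (a + i)

/-- The `j`-th term of the generalized hypergeometric series
`(∏ᵢ ⟨aᵢ⟩^j / ∏ₗ ⟨bₗ⟩^j) · (θ(s-1))^j / j!`. -/
noncomputable def ghdSeries {P Q : ℕ} (a : Fin P → ℝ) (b : Fin Q → ℝ) (θ s : ℝ) (j : ℕ) : ℝ :=
  ((∏ i, risingFact (a i) j) / (∏ l, risingFact (b l) j)) * (θ * (s - 1)) ^ j / (j.factorial : ℝ)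

/-- A probability mass function `p` on `ℕ` follows the generalized hypergeometric
distribution `GHD(a, b, θ)` if there is some `ρ > 1` such that for every `s` with `|s| < ρ`,
both the probability generating series and the generalized hypergeometric series converge and
`∑ₖ p(k) sᵏ = ∑ⱼ (∏ᵢ ⟨aᵢ⟩^j / ∏ₗ ⟨bₗ⟩^j) (θ(s-1))^j / j!`. -/
def IsGHD {P Q : ℕ} (a : Fin P → ℝ) (b : Fin Q → ℝ) (θ : ℝ) (p : ℕ → ℝ) : Prop :=
  (∀ k, 0 ≤ p k) ∧ Summable p ∧ (∑' k, p k) = 1 ∧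
    ∃ ρ : ℝ, 1 < ρ ∧ ∀ s : ℝ, |s| < ρ →
      Summable (fun k => p k * s ^ k) ∧
      Summable (fun j => ghdSeries a b θ s j) ∧
      (∑' k, p k * s ^ k) = ∑' j, ghdSeries a b θ s j

/-!
Substituting `s = 1 + u` in the probability generating function and expanding `(1 + u)ᵏ`
binomially turns it into the power series `∑ₙ Aₙ uⁿ` in the binomial moments
`Aₙ = ∑ₖ C(k, n) p(k)`; the exchange of summations is justified by nonnegativity, since
`1 + |u| < ρ` for small `u`. The GHD identity presents the same function as
`∑ₙ (∏ᵢ ⟨aᵢ⟩ⁿ / ∏ₗ ⟨bₗ⟩ⁿ) θⁿ/n! · uⁿ`, so by uniqueness of power series coefficients the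
two coefficient sequences agree. The case `n = 1` gives `m = θ ∏ᵢ aᵢ / ∏ₗ bₗ`, and the
`r`-th factorial moment is `r! Aᵣ`; the claim is then an algebraic identity.
-/

open Filter Topology Finset FormalMultilinearSeries

theorem hasFPowerSeriesAt_ofScalars_of_hasSum {𝕜 : Type*} [NontriviallyNormedField 𝕜]
    [CompleteSpace 𝕜] {c : ℕ → 𝕜} {f : 𝕜 → 𝕜}
    (hf : ∀ᶠ u in 𝓝 0, HasSum (fun n => c n * u ^ n) (f u)) :
    HasFPowerSeriesAt f (ofScalars 𝕜 c) 0 := by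
  obtain ⟨ε, hε, hball⟩ := Metric.eventually_nhds_iff_ball.mp hf
  obtain ⟨u, hu₀, huε⟩ := NormedField.exists_norm_lt 𝕜 hε
  have hradius : 0 < (ofScalars 𝕜 c).radius := by
    refine lt_of_lt_of_le (by simpa using hu₀)
      ((ofScalars 𝕜 c).le_radius_of_tendsto (r := ‖u‖₊) (l := 0) ?_)
    simpa [ofScalars_norm, norm_mul, norm_pow] using
      ((hball u (mem_ball_zero_iff.mpr huε)).summable.tendsto_atTop_zero).norm
  refine ((ofScalars 𝕜 c).hasFPowerSeriesOnBall hradius).hasFPowerSeriesAt.congr ?_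
  filter_upwards [hf] with v hv
  simpa [FormalMultilinearSeries.sum, ofScalars_apply_eq, mul_comm] using hv.tsum_eq

theorem eq_of_hasSum_mul_pow {𝕜 : Type*} [NontriviallyNormedField 𝕜]
    [CompleteSpace 𝕜] {c c' : ℕ → 𝕜} {f : 𝕜 → 𝕜}
    (hc : ∀ᶠ u in 𝓝 0, HasSum (fun n => c n * u ^ n) (f u))
    (hc' : ∀ᶠ u in 𝓝 0, HasSum (fun n => c' n * u ^ n) (f u)) : c = c' :=
  ofScalars_series_injective 𝕜 𝕜 <|
    (hasFPowerSeriesAt_ofScalars_of_hasSum hc).eq_formalMultilinearSeries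
      (hasFPowerSeriesAt_ofScalars_of_hasSum hc')

noncomputable def binomialMoment (p : ℕ → ℝ) (n : ℕ) : ℝ := ∑' k, (k.choose n : ℝ) * p k

theorem hasSum_choose_mul_pow {R : Type*} [CommSemiring R] [TopologicalSpace R] (k : ℕ) (u : R) :
    HasSum (fun n => (k.choose n : R) * u ^ n) ((1 + u) ^ k) := by
  have : HasSum (fun n => (k.choose n : R) * u ^ n)
      (∑ n ∈ range (k + 1), (k.choose n : R) * u ^ n) :=
    hasSum_sum_of_ne_finset_zero fun n hn => by
      simp [Nat.choose_eq_zero_of_lt (by simpa using hn : k < n)]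
  convert this using 1
  rw [add_comm, add_pow]
  exact sum_congr rfl fun n _ => by simp [mul_comm]

theorem hasSum_binomialMoment_mul_pow {p : ℕ → ℝ} (hp : ∀ k, 0 ≤ p k) {u : ℝ}
    (h : Summable fun k => p k * (1 + |u|) ^ k) :
    HasSum (fun n => binomialMoment p n * u ^ n) (∑' k, p k * (1 + u) ^ k) := by
  set F : ℕ × ℕ → ℝ := fun q => (q.1.choose q.2 : ℝ) * p q.1 * u ^ q.2
  have hrow (v : ℝ) (k : ℕ) :
      HasSum (fun n => (k.choose n : ℝ) * p k * v ^ n) (p k * (1 + v) ^ k) := by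
    simpa [mul_assoc, mul_left_comm] using (hasSum_choose_mul_pow k v).mul_left (p k)
  have hnorm (q : ℕ × ℕ) : ‖F q‖ = (q.1.choose q.2 : ℝ) * p q.1 * |u| ^ q.2 := by
    simp [F, abs_of_nonneg (hp q.1)]
  have hF : Summable F := by
    refine Summable.of_norm ((summable_prod_of_nonneg fun _ => norm_nonneg _).mpr ⟨?_, ?_⟩)
    · simpa only [hnorm] using fun k => (hrow |u| k).summable
    · simpa only [hnorm, (hrow |u| _).tsum_eq] using h
  have hsum : HasSum F (∑' k, p k * (1 + u) ^ k) := by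
    rw [(hF.hasSum.prod_fiberwise fun k => hrow u k).tsum_eq]
    exact hF.hasSum
  refine (Equiv.prodComm ℕ ℕ).hasSum_iff.mpr hsum |>.prod_fiberwise fun n => ?_
  simpa [F, binomialMoment, tsum_mul_right] using (hF.prod_symm.prod_factor n).hasSum

theorem binomialMoment_one (p : ℕ → ℝ) : binomialMoment p 1 = ∑' k : ℕ, (k : ℝ) * p k := by
  simp [binomialMoment]

theorem tsum_descFactorial_mul (p : ℕ → ℝ) (r : ℕ) :
    ∑' k, (k.descFactorial r : ℝ) * p k = r.factorial * binomialMoment p r := by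
  simp only [binomialMoment, ← tsum_mul_left, Nat.descFactorial_eq_factorial_mul_choose]
  push_cast
  exact tsum_congr fun k => by ring

theorem risingFact_eq_zero_of_pow_eq_zero {x : ℝ} {r : ℕ} (h : x ^ r = 0) :
    risingFact x r = 0 := by
  obtain ⟨rfl, hr⟩ := pow_eq_zero_iff'.mp h
  exact prod_eq_zero (mem_range.mpr (Nat.pos_of_ne_zero hr)) (by simp)

-- `xʳ = 0` forces `x = 0 < r`, hence `⟨x⟩ʳ = 0`: the junk values of `/ 0` match on both sides.
theorem pow_mul_risingFact_div_pow (x : ℝ) (r : ℕ) :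
    x ^ r * (risingFact x r / x ^ r) = risingFact x r :=
  mul_div_cancel_of_imp' risingFact_eq_zero_of_pow_eq_zero

theorem inv_pow_mul_pow_div_risingFact (x : ℝ) (r : ℕ) :
    (x ^ r)⁻¹ * (x ^ r / risingFact x r) = (risingFact x r)⁻¹ := by
  rcases eq_or_ne (x ^ r) 0 with h | h
  · simp [h, risingFact_eq_zero_of_pow_eq_zero h]
  · rw [inv_mul_eq_div, div_div_cancel_left' h]

noncomputable def ghdCoeff {P Q : ℕ} (a : Fin P → ℝ) (b : Fin Q → ℝ) (θ : ℝ) (j : ℕ) : ℝ :=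
  (∏ i, risingFact (a i) j) / (∏ l, risingFact (b l) j) * θ ^ j / j.factorial

theorem ghdSeries_eq_ghdCoeff_mul {P Q : ℕ} (a : Fin P → ℝ) (b : Fin Q → ℝ) (θ s : ℝ) (j : ℕ) :
    ghdSeries a b θ s j = ghdCoeff a b θ j * (s - 1) ^ j := by
  simp only [ghdSeries, ghdCoeff, mul_pow]
  ring

theorem ghdCoeff_one {P Q : ℕ} (a : Fin P → ℝ) (b : Fin Q → ℝ) (θ : ℝ) :
    ghdCoeff a b θ 1 = θ * (∏ i, a i) / ∏ l, b l := by
  simp [ghdCoeff, risingFact]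
  ring

theorem factorial_mul_ghdCoeff {P Q : ℕ} (a : Fin P → ℝ) (b : Fin Q → ℝ) (θ : ℝ) (r : ℕ) :
    r.factorial * ghdCoeff a b θ r = ghdCoeff a b θ 1 ^ r *
      (∏ i, risingFact (a i) r / a i ^ r) * ∏ l, b l ^ r / risingFact (b l) r := by
  calc (r.factorial : ℝ) * ghdCoeff a b θ r
      = θ ^ r * (∏ i, a i ^ r * (risingFact (a i) r / a i ^ r)) *
          ∏ l, (b l ^ r)⁻¹ * (b l ^ r / risingFact (b l) r) := by
        simp only [ghdCoeff, pow_mul_risingFact_div_pow, inv_pow_mul_pow_div_risingFact,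
          prod_inv_distrib]
        field_simp
    _ = _ := by
        rw [ghdCoeff_one, prod_mul_distrib, prod_mul_distrib, prod_inv_distrib, prod_pow, prod_pow]
        ring

theorem IsGHD.binomialMoment_eq {P Q : ℕ} {a : Fin P → ℝ} {b : Fin Q → ℝ} {θ : ℝ} {p : ℕ → ℝ}
    (hp : IsGHD a b θ p) : binomialMoment p = ghdCoeff a b θ := by
  obtain ⟨hp0, -, -, ρ, hρ, hpgf⟩ := hp
  have hnear : ∀ᶠ u in 𝓝 (0 : ℝ), |u| < ρ - 1 := by
    filter_upwards [Metric.ball_mem_nhds (0 : ℝ) (sub_pos.mpr hρ)] with u hu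
    simpa using hu
  refine eq_of_hasSum_mul_pow (f := fun u => ∑' k, p k * (1 + u) ^ k) ?_ ?_
  · filter_upwards [hnear] with u hu
    have hs : |(1 + |u|)| < ρ := by rw [abs_of_nonneg (by positivity)]; linarith
    exact hasSum_binomialMoment_mul_pow hp0 (hpgf _ hs).1
  · filter_upwards [hnear] with u hu
    have hs : |1 + u| < ρ := (abs_add_le 1 u).trans_lt (by rw [abs_one]; linarith)
    obtain ⟨-, hsum, heq⟩ := hpgf _ hs
    simpa [ghdSeries_eq_ghdCoeff_mul, heq] using hsum.hasSum

theorem ghd_constant_moments_ratio_general {P Q : ℕ} (a : Fin P → ℝ) (b : Fin Q → ℝ) (θ : ℝ)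
    (p : ℕ → ℝ) (hp : IsGHD a b θ p) (m : ℝ) (hm : m = ∑' k : ℕ, (k : ℝ) * p k)
    (r : ℕ) :
    (∑' k, (k.descFactorial r : ℝ) * p k)
      = m ^ r * (∏ i, risingFact (a i) r / (a i) ^ r) * (∏ l, (b l) ^ r / risingFact (b l) r) := by
  rw [tsum_descFactorial_mul, hm, ← binomialMoment_one, hp.binomialMoment_eq,
    factorial_mul_ghdCoeff]

/-- **Constant Moments Ratio property.** If `p` follows `GHD(a, b, θ)` with
positive parameters and `m = ∑ₖ k p(k)` is its mean, then for every positive integer `r`,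
`∑ₖ (k)ᵣ p(k) = m^r · ∏ᵢ (⟨aᵢ⟩^r / aᵢ^r) · ∏ₗ (bₗ^r / ⟨bₗ⟩^r)`; i.e. the `r`-th factorial
moment equals `f⁽ʳ⁾(m)` for the CMR function `f⁽ʳ⁾(x) = x^r ∏ᵢ (⟨aᵢ⟩^r/aᵢ^r) ∏ₗ (bₗ^r/⟨bₗ⟩^r)`. -/
theorem ghd_constant_moments_ratio {P Q : ℕ} (a : Fin P → ℝ) (b : Fin Q → ℝ) (θ : ℝ)
    (ha : ∀ i, 0 < a i) (hb : ∀ l, 0 < b l) (hθ : 0 < θ)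
    (p : ℕ → ℝ) (hp : IsGHD a b θ p) (m : ℝ) (hm : m = ∑' k : ℕ, (k : ℝ) * p k)
    (r : ℕ) (hr : 0 < r) :
    (∑' k, (k.descFactorial r : ℝ) * p k)
      = m ^ r * (∏ i, risingFact (a i) r / (a i) ^ r) * (∏ l, (b l) ^ r / risingFact (b l) r) :=
  ghd_constant_moments_ratio_general a b θ p hp m hm r
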